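/- For every integer n > 1, the reverse divisor 11·(10^n − 1) is a Ball magic number; that is, there exists a natural number x with rev(x) < x such that Ball(x) = 11·(10^n − 1). -/
import Mathlib


/-- Digit reversal of a natural number in base 10. -/
def rev (m : ℕ) : ℕ := Nat.ofDigits 10 ((Nat.digits 10 m).reverse)

/-- Reversal of `y` padded with zeros up to length `L`. -/
def revPad (L y : ℕ) : ℕ :=
  Nat.ofDigits 10 ((Nat.digits 10 y ++ List.replicate (L - (Nat.digits 10 y).length) 0).reverse)

/-- Ball number generated by `x` (meaningful when `rev x < x`). -/
def ball (x : ℕ) : ℕ :=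
  (x - rev x) + revPad ((Nat.digits 10 x).length) (x - rev x)

/-- `B` is a Ball magic number. -/
def IsBallMagic (B : ℕ) : Prop := ∃ x : ℕ, rev x < x ∧ ball x = B

lemma digits_pow10 (n : ℕ) : Nat.digits 10 (10 ^ n) = List.replicate n 0 ++ [1] := by
  induction n with
  | zero => simp
  | succ k ih =>
    rw [pow_succ, Nat.digits_def' (by norm_num) (by positivity),
      Nat.mul_mod_left, Nat.mul_div_cancel _ (by norm_num : (0:ℕ) < 10), ih,
      List.replicate_succ]
    simp

lemma digits_pow10_sub_one (n : ℕ) :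
    Nat.digits 10 (10 ^ n - 1) = List.replicate n 9 := by
  induction n with
  | zero => simp
  | succ k ih =>
    have h1 : (1:ℕ) ≤ 10 ^ (k+1) := Nat.one_le_pow _ _ (by norm_num)
    rw [Nat.digits_def' (by norm_num) (by omega)]
    have hmod : (10 ^ (k+1) - 1) % 10 = 9 := by
      have : 10 ^ (k+1) - 1 = 10 * (10 ^ k - 1) + 9 := by
        have : (1:ℕ) ≤ 10 ^ k := Nat.one_le_pow _ _ (by norm_num)
        ring_nf
        omega
      omega
    have hdiv : (10 ^ (k+1) - 1) / 10 = 10 ^ k - 1 := by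
      have h2 : (1:ℕ) ≤ 10 ^ k := Nat.one_le_pow _ _ (by norm_num)
      have : 10 ^ (k+1) - 1 = 10 * (10 ^ k - 1) + 9 := by ring_nf; omega
      omega
    rw [hmod, hdiv, ih, List.replicate_succ]

lemma ofDigits_replicate_zero (n : ℕ) : Nat.ofDigits 10 (List.replicate n 0) = 0 := by
  induction n with
  | zero => simp
  | succ k ih => simp [List.replicate_succ, Nat.ofDigits_cons, ih]

lemma ofDigits_replicate_nine (n : ℕ) :
    Nat.ofDigits 10 (List.replicate n 9) = 10 ^ n - 1 := by
  rw [← digits_pow10_sub_one, Nat.ofDigits_digits]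

theorem ballMagic_11_mul (n : ℕ) (hn : 1 < n) :
    IsBallMagic (11 * (10 ^ n - 1)) := by
  refine ⟨10 ^ n, ?_, ?_⟩
  · have hrev : rev (10 ^ n) = 1 := by
      rw [rev, digits_pow10]
      simp [Nat.ofDigits_cons, Nat.ofDigits_append, ofDigits_replicate_zero]
    rw [hrev]
    exact Nat.one_lt_pow (by omega) (by norm_num)
  · have hrev : rev (10 ^ n) = 1 := by
      rw [rev, digits_pow10]
      simp [Nat.ofDigits_cons, Nat.ofDigits_append, ofDigits_replicate_zero]
    have h1 : (1:ℕ) ≤ 10 ^ n := Nat.one_le_pow _ _ (by norm_num)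
    rw [ball, hrev, digits_pow10]
    have hlen : (List.replicate n 0 ++ [1]).length = n + 1 := by simp
    rw [hlen, revPad, digits_pow10_sub_one]
    have : n + 1 - (List.replicate n 9).length = 1 := by simp
    rw [this]
    have : (List.replicate n 9 ++ List.replicate 1 0).reverse
        = 0 :: List.replicate n 9 := by
      simp [List.replicate_succ]
    rw [this, Nat.ofDigits_cons, ofDigits_replicate_nine]
    omega
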